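/- arXiv:1711.02649 — 7 statements merged into one kernel-verified Lean document; each statement's English description precedes it below -/
import Mathlib

section
/- Any solution (T₁,T₂,T₃) of the reduced Nahm–Schmid equations with values in a compact Lie algebra is uniformly bounded: for all t in its interval of definition, ‖Tᵢ(t)‖² ≤ 2‖T₁(0)‖² + ‖T₂(0)‖² + ‖T₃(0)‖² for each i = 1,2,3. -/
/-!
The invariance of the inner product makes `(x, y, z) ↦ ⟪x, ⁅y, z⁆⟫` an alternating form, so along a
solution `½ d‖Tᵢ‖²/dt = ±⟪T₁, ⁅T₂, T₃⁆⟫` with signs making `‖T₁‖² + ‖T₂‖²` and `‖T₁‖² + ‖T₃‖²`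
conserved. Each `‖Tᵢ(t)‖²` is then bounded by one of these two constants.
-/

open scoped RealInnerProductSpace

section LieRing

variable {L : Type*} [LieRing L] (x y : L)

theorem lie_lie_self_left : ⁅⁅y, x⁆, y⁆ = ⁅y, ⁅x, y⁆⁆ := by
  rw [leibniz_lie y x y, lie_self, lie_zero, add_zero]

theorem lie_lie_self_right : ⁅⁅y, x⁆, x⁆ = ⁅x, ⁅x, y⁆⁆ := by
  rw [← lie_skew x y, lie_neg, leibniz_lie x y x, lie_self, lie_zero, add_zero,
    ← lie_skew x y, neg_lie, neg_neg]

end LieRing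

section InnerProductSpace

variable {E : Type*} [NormedAddCommGroup E] [InnerProductSpace ℝ E]

theorem eq_neg_of_inner_eq_neg_norm_sq {a b : E} (hab : ⟪a, b⟫ = -‖b‖ ^ 2)
    (hba : ⟪b, a⟫ = -‖a‖ ^ 2) : b = -a := by
  have hsum : ‖a + b‖ ^ 2 = 0 := by
    rw [norm_add_sq_real]
    linarith [real_inner_comm a b]
  exact eq_neg_of_add_eq_zero_right (norm_eq_zero.mp (pow_eq_zero_iff two_ne_zero |>.mp hsum))

theorem Convex.norm_sq_add_norm_sq_eq {I : Set ℝ} (hI : Convex ℝ I) {A B A' B' : ℝ → E}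
    (hA : ∀ s ∈ I, HasDerivWithinAt A (A' s) I s) (hB : ∀ s ∈ I, HasDerivWithinAt B (B' s) I s)
    (horth : ∀ s ∈ I, ⟪A s, A' s⟫ + ⟪B s, B' s⟫ = 0) {s t : ℝ} (hs : s ∈ I) (ht : t ∈ I) :
    ‖A t‖ ^ 2 + ‖B t‖ ^ 2 = ‖A s‖ ^ 2 + ‖B s‖ ^ 2 := by
  have hderiv : ∀ u ∈ I, HasDerivWithinAt (fun u => ‖A u‖ ^ 2 + ‖B u‖ ^ 2) 0 I u := by
    intro u hu
    have hsum := (hA u hu).norm_sq.add (hB u hu).norm_sq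
    rwa [← mul_add, horth u hu, mul_zero] at hsum
  simpa [sub_eq_zero] using
    hI.norm_image_sub_le_of_norm_hasDerivWithin_le (C := 0) hderiv (fun u _ => by simp) hs ht

end InnerProductSpace

section InvariantInner

variable {𝔤 : Type*} [NormedAddCommGroup 𝔤] [InnerProductSpace ℝ 𝔤] [LieRing 𝔤]

theorem inner_lie_swap_lie (hinv : ∀ x y z : 𝔤, ⟪⁅x, y⁆, z⟫ = -⟪y, ⁅x, z⁆⟫) (x y : 𝔤) :
    ⟪⁅y, x⁆, ⁅x, y⁆⟫ = -‖⁅x, y⁆‖ ^ 2 := by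
  calc ⟪⁅y, x⁆, ⁅x, y⁆⟫ = -⟪x, ⁅⁅y, x⁆, y⁆⟫ := by rw [hinv, lie_lie_self_left]
    _ = ⟪⁅x, ⁅x, y⁆⁆, y⟫ := by rw [← hinv, lie_lie_self_right]
    _ = -‖⁅x, y⁆‖ ^ 2 := by rw [hinv, real_inner_self_eq_norm_sq]

/-- The two additive structures on `𝔤` need not agree a priori; invariance forces the bracket to be
antisymmetric for the one underlying the inner product. -/
theorem inner_lie_swap_left (hinv : ∀ x y z : 𝔤, ⟪⁅x, y⁆, z⟫ = -⟪y, ⁅x, z⁆⟫) (x y z : 𝔤) :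
    ⟪⁅y, x⁆, z⟫ = -⟪⁅x, y⁆, z⟫ := by
  rw [eq_neg_of_inner_eq_neg_norm_sq (inner_lie_swap_lie hinv y x) (inner_lie_swap_lie hinv x y),
    inner_neg_left]

theorem inner_lie_swap_right (hinv : ∀ x y z : 𝔤, ⟪⁅x, y⁆, z⟫ = -⟪y, ⁅x, z⁆⟫) (x y z : 𝔤) :
    ⟪x, ⁅z, y⁆⟫ = -⟪x, ⁅y, z⁆⟫ := by
  rw [real_inner_comm ⁅z, y⁆, real_inner_comm ⁅y, z⁆, inner_lie_swap_left hinv]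

theorem inner_lie_cyclic (hinv : ∀ x y z : 𝔤, ⟪⁅x, y⁆, z⟫ = -⟪y, ⁅x, z⁆⟫) (x y z : 𝔤) :
    ⟪x, ⁅y, z⁆⟫ = ⟪y, ⁅z, x⁆⟫ := by
  rw [real_inner_comm ⁅z, x⁆ y, hinv, inner_lie_swap_right hinv]

end InvariantInner

theorem reduced_nahm_schmid_bounded_general
    {𝔤 : Type*} [NormedAddCommGroup 𝔤] [InnerProductSpace ℝ 𝔤]
    [LieRing 𝔤]
    (hinv : ∀ x y z : 𝔤, ⟪⁅x, y⁆, z⟫ = -⟪y, ⁅x, z⁆⟫)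
    (I : Set ℝ) (hI : Convex ℝ I) (h0I : (0 : ℝ) ∈ I)
    (T₁ T₂ T₃ : ℝ → 𝔤)
    (h1 : ∀ t ∈ I, @HasDerivWithinAt ℝ _ 𝔤 NormedAddCommGroup.toAddCommGroup (@NormedSpace.toModule ℝ 𝔤 _ _ InnerProductSpace.toNormedSpace) _ (@IsBoundedSMul.continuousSMul ℝ 𝔤 _ _ _ (@NormedAddCommGroup.toAddCommGroup 𝔤 _).toZero (@NormedSpace.toModule ℝ 𝔤 _ _ InnerProductSpace.toNormedSpace).toSMul (@NormedSpace.toIsBoundedSMul ℝ 𝔤 _ _ InnerProductSpace.toNormedSpace)) T₁ (-⁅T₂ t, T₃ t⁆) I t)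
    (h2 : ∀ t ∈ I, @HasDerivWithinAt ℝ _ 𝔤 NormedAddCommGroup.toAddCommGroup (@NormedSpace.toModule ℝ 𝔤 _ _ InnerProductSpace.toNormedSpace) _ (@IsBoundedSMul.continuousSMul ℝ 𝔤 _ _ _ (@NormedAddCommGroup.toAddCommGroup 𝔤 _).toZero (@NormedSpace.toModule ℝ 𝔤 _ _ InnerProductSpace.toNormedSpace).toSMul (@NormedSpace.toIsBoundedSMul ℝ 𝔤 _ _ InnerProductSpace.toNormedSpace)) T₂ (⁅T₃ t, T₁ t⁆) I t)
    (h3 : ∀ t ∈ I, @HasDerivWithinAt ℝ _ 𝔤 NormedAddCommGroup.toAddCommGroup (@NormedSpace.toModule ℝ 𝔤 _ _ InnerProductSpace.toNormedSpace) _ (@IsBoundedSMul.continuousSMul ℝ 𝔤 _ _ _ (@NormedAddCommGroup.toAddCommGroup 𝔤 _).toZero (@NormedSpace.toModule ℝ 𝔤 _ _ InnerProductSpace.toNormedSpace).toSMul (@NormedSpace.toIsBoundedSMul ℝ 𝔤 _ _ InnerProductSpace.toNormedSpace)) T₃ (⁅T₁ t, T₂ t⁆) I t) :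
    ∀ t ∈ I,
      ‖T₁ t‖ ^ 2 ≤ 2 * ‖T₁ 0‖ ^ 2 + ‖T₂ 0‖ ^ 2 + ‖T₃ 0‖ ^ 2 ∧
      ‖T₂ t‖ ^ 2 ≤ 2 * ‖T₁ 0‖ ^ 2 + ‖T₂ 0‖ ^ 2 + ‖T₃ 0‖ ^ 2 ∧
      ‖T₃ t‖ ^ 2 ≤ 2 * ‖T₁ 0‖ ^ 2 + ‖T₂ 0‖ ^ 2 + ‖T₃ 0‖ ^ 2 := by
  -- the `-` in `h1` is the negation of the Lie ring, not of the normed group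
  simp only [lie_skew] at h1
  have hswap (s : ℝ) := inner_lie_swap_right hinv (T₁ s) (T₂ s) (T₃ s)
  have hcyc₁ (s : ℝ) := inner_lie_cyclic hinv (T₁ s) (T₂ s) (T₃ s)
  have hcyc₂ (s : ℝ) := inner_lie_cyclic hinv (T₂ s) (T₃ s) (T₁ s)
  intro t ht
  have h12 := hI.norm_sq_add_norm_sq_eq h1 h2
    (fun s _ => by linarith [hswap s, hcyc₁ s]) h0I ht
  have h13 := hI.norm_sq_add_norm_sq_eq h1 h3
    (fun s _ => by linarith [hswap s, hcyc₁ s, hcyc₂ s]) h0I ht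
  refine ⟨?_, ?_, ?_⟩ <;> linarith [sq_nonneg ‖T₁ t‖, sq_nonneg ‖T₂ t‖, sq_nonneg ‖T₃ t‖,
    sq_nonneg ‖T₁ 0‖, sq_nonneg ‖T₂ 0‖, sq_nonneg ‖T₃ 0‖]

/-- Any solution of the reduced Nahm–Schmid equations on an interval `I`
containing `0`, with values in a Lie algebra with invariant inner product,
is uniformly bounded: `‖Tᵢ(t)‖² ≤ 2‖T₁(0)‖² + ‖T₂(0)‖² + ‖T₃(0)‖²`. -/
theorem reduced_nahm_schmid_bounded
    {𝔤 : Type*} [NormedAddCommGroup 𝔤] [InnerProductSpace ℝ 𝔤]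
    [LieRing 𝔤] [LieAlgebra ℝ 𝔤]
    (hinv : ∀ x y z : 𝔤, ⟪⁅x, y⁆, z⟫ = -⟪y, ⁅x, z⁆⟫)
    (I : Set ℝ) (hI : Convex ℝ I) (h0I : (0 : ℝ) ∈ I)
    (T₁ T₂ T₃ : ℝ → 𝔤)
    (h1 : ∀ t ∈ I, @HasDerivWithinAt ℝ _ 𝔤 NormedAddCommGroup.toAddCommGroup (@NormedSpace.toModule ℝ 𝔤 _ _ InnerProductSpace.toNormedSpace) _ (@IsBoundedSMul.continuousSMul ℝ 𝔤 _ _ _ (@NormedAddCommGroup.toAddCommGroup 𝔤 _).toZero (@NormedSpace.toModule ℝ 𝔤 _ _ InnerProductSpace.toNormedSpace).toSMul (@NormedSpace.toIsBoundedSMul ℝ 𝔤 _ _ InnerProductSpace.toNormedSpace)) T₁ (-⁅T₂ t, T₃ t⁆) I t)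
    (h2 : ∀ t ∈ I, @HasDerivWithinAt ℝ _ 𝔤 NormedAddCommGroup.toAddCommGroup (@NormedSpace.toModule ℝ 𝔤 _ _ InnerProductSpace.toNormedSpace) _ (@IsBoundedSMul.continuousSMul ℝ 𝔤 _ _ _ (@NormedAddCommGroup.toAddCommGroup 𝔤 _).toZero (@NormedSpace.toModule ℝ 𝔤 _ _ InnerProductSpace.toNormedSpace).toSMul (@NormedSpace.toIsBoundedSMul ℝ 𝔤 _ _ InnerProductSpace.toNormedSpace)) T₂ (⁅T₃ t, T₁ t⁆) I t)
    (h3 : ∀ t ∈ I, @HasDerivWithinAt ℝ _ 𝔤 NormedAddCommGroup.toAddCommGroup (@NormedSpace.toModule ℝ 𝔤 _ _ InnerProductSpace.toNormedSpace) _ (@IsBoundedSMul.continuousSMul ℝ 𝔤 _ _ _ (@NormedAddCommGroup.toAddCommGroup 𝔤 _).toZero (@NormedSpace.toModule ℝ 𝔤 _ _ InnerProductSpace.toNormedSpace).toSMul (@NormedSpace.toIsBoundedSMul ℝ 𝔤 _ _ InnerProductSpace.toNormedSpace)) T₃ (⁅T₁ t, T₂ t⁆) I t) :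
    ∀ t ∈ I,
      ‖T₁ t‖ ^ 2 ≤ 2 * ‖T₁ 0‖ ^ 2 + ‖T₂ 0‖ ^ 2 + ‖T₃ 0‖ ^ 2 ∧
      ‖T₂ t‖ ^ 2 ≤ 2 * ‖T₁ 0‖ ^ 2 + ‖T₂ 0‖ ^ 2 + ‖T₃ 0‖ ^ 2 ∧
      ‖T₃ t‖ ^ 2 ≤ 2 * ‖T₁ 0‖ ^ 2 + ‖T₂ 0‖ ^ 2 + ‖T₃ 0‖ ^ 2 :=
  reduced_nahm_schmid_bounded_general hinv I hI h0I T₁ T₂ T₃ h1 h2 h3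
end

section
/- Let f : [0,1] → ℝ be C², f ≥ 0, f(0) = 0, satisfying f̈ + M f ≥ 0 for a constant 0 < M < π². If f(t₀) = 0 for some t₀ ∈ (0,1], then f ≡ 0 on [0,t₀]. -/
/-!
Compare `f` with `g t = sin (√M t)`, which solves `g'' + M g = 0` and, since `√M < π`, is
positive on `(0, 1]`. The Wronskian `W = f' g - f g'` vanishes at `0` and has derivative
`(f'' + M f) g ≥ 0`, so `W ≥ 0`. As `(f / g)' = W / g²`, the quotient `f / g` is monotone on
`(0, 1]`; hence `0 ≤ f t / g t ≤ f t₀ / g t₀ = 0` for `0 < t ≤ t₀`.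
-/

open Set

def wronskian (f f' g g' : ℝ → ℝ) (t : ℝ) : ℝ :=
  f' t * g t - f t * g' t

theorem hasDerivAt_wronskian {f f' g g' : ℝ → ℝ} {f'' g'' x : ℝ}
    (hf : HasDerivAt f (f' x) x) (hf' : HasDerivAt f' f'' x)
    (hg : HasDerivAt g (g' x) x) (hg' : HasDerivAt g' g'' x) :
    HasDerivAt (wronskian f f' g g') (f'' * g x - f x * g'') x :=
  ((hf'.mul hg).sub (hf.mul hg')).congr_deriv (by ring)

theorem hasDerivAt_div_eq_wronskian {f f' g g' : ℝ → ℝ} {x : ℝ}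
    (hf : HasDerivAt f (f' x) x) (hg : HasDerivAt g (g' x) x) (hgx : g x ≠ 0) :
    HasDerivAt (fun t => f t / g t) (wronskian f f' g g' x / g x ^ 2) x :=
  hf.div hg hgx

theorem continuousOn_wronskian {s : Set ℝ} {f f' g g' : ℝ → ℝ}
    (hf : ContinuousOn f s) (hf' : ContinuousOn f' s)
    (hg : ContinuousOn g s) (hg' : ContinuousOn g' s) :
    ContinuousOn (wronskian f f' g g') s :=
  (hf'.mul hg).sub (hf.mul hg')

section Comparison

variable {a b : ℝ} {f f' f'' g g' g'' : ℝ → ℝ}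

theorem wronskian_nonneg_of_comparison
    (hf : ∀ t ∈ Icc a b, HasDerivWithinAt f (f' t) (Icc a b) t)
    (hf' : ∀ t ∈ Icc a b, HasDerivWithinAt f' (f'' t) (Icc a b) t)
    (hg : ∀ t ∈ Icc a b, HasDerivWithinAt g (g' t) (Icc a b) t)
    (hg' : ∀ t ∈ Icc a b, HasDerivWithinAt g' (g'' t) (Icc a b) t)
    (hcomp : ∀ t ∈ Ioo a b, f t * g'' t ≤ f'' t * g t)
    (hWa : 0 ≤ wronskian f f' g g' a) :
    ∀ t ∈ Icc a b, 0 ≤ wronskian f f' g g' t := by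
  have hderiv : ∀ t ∈ Ioo a b,
      HasDerivAt (wronskian f f' g g') (f'' t * g t - f t * g'' t) t := by
    intro t ht
    have hnhds : Icc a b ∈ nhds t := Icc_mem_nhds ht.1 ht.2
    have ht' := Ioo_subset_Icc_self ht
    exact hasDerivAt_wronskian ((hf t ht').hasDerivAt hnhds) ((hf' t ht').hasDerivAt hnhds)
      ((hg t ht').hasDerivAt hnhds) ((hg' t ht').hasDerivAt hnhds)
  have hmono : MonotoneOn (wronskian f f' g g') (Icc a b) := by
    refine monotoneOn_of_deriv_nonneg (convex_Icc a b)
      (continuousOn_wronskian (fun t ht => (hf t ht).continuousWithinAt)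
        (fun t ht => (hf' t ht).continuousWithinAt) (fun t ht => (hg t ht).continuousWithinAt)
        (fun t ht => (hg' t ht).continuousWithinAt)) ?_ ?_ <;> rw [interior_Icc]
    · exact fun t ht => (hderiv t ht).differentiableAt.differentiableWithinAt
    · intro t ht
      rw [(hderiv t ht).deriv]
      linarith [hcomp t ht]
  intro t ht
  exact hWa.trans (hmono (left_mem_Icc.2 (ht.1.trans ht.2)) ht ht.1)

theorem monotoneOn_div_of_wronskian_nonneg
    (hf : ∀ t ∈ Icc a b, HasDerivWithinAt f (f' t) (Icc a b) t)
    (hg : ∀ t ∈ Icc a b, HasDerivWithinAt g (g' t) (Icc a b) t)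
    (hg_pos : ∀ t ∈ Ioc a b, 0 < g t)
    (hW : ∀ t ∈ Ioo a b, 0 ≤ wronskian f f' g g' t) :
    MonotoneOn (fun t => f t / g t) (Ioc a b) := by
  have hderiv : ∀ t ∈ Ioo a b,
      HasDerivAt (fun t => f t / g t) (wronskian f f' g g' t / g t ^ 2) t := by
    intro t ht
    have hnhds : Icc a b ∈ nhds t := Icc_mem_nhds ht.1 ht.2
    have ht' := Ioo_subset_Icc_self ht
    exact hasDerivAt_div_eq_wronskian ((hf t ht').hasDerivAt hnhds) ((hg t ht').hasDerivAt hnhds)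
      (hg_pos t (Ioo_subset_Ioc_self ht)).ne'
  have hcont : ContinuousOn (fun t => f t / g t) (Ioc a b) := by
    refine ContinuousOn.div (fun t ht => ?_) (fun t ht => ?_) fun t ht => (hg_pos t ht).ne'
    · exact ((hf t (Ioc_subset_Icc_self ht)).continuousWithinAt).mono Ioc_subset_Icc_self
    · exact ((hg t (Ioc_subset_Icc_self ht)).continuousWithinAt).mono Ioc_subset_Icc_self
  refine monotoneOn_of_deriv_nonneg (convex_Ioc a b) hcont ?_ ?_ <;> rw [interior_Ioc]
  · exact fun t ht => (hderiv t ht).differentiableAt.differentiableWithinAt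
  · intro t ht
    rw [(hderiv t ht).deriv]
    exact div_nonneg (hW t ht) (sq_nonneg _)

end Comparison

theorem sturm_comparison_vanishing_general
    (M : ℝ) (hM0 : 0 < M) (hMπ : M < Real.pi ^ 2)
    (f f' f'' : ℝ → ℝ)
    (hd1 : ∀ t ∈ Set.Icc (0 : ℝ) 1, HasDerivWithinAt f (f' t) (Set.Icc 0 1) t)
    (hd2 : ∀ t ∈ Set.Icc (0 : ℝ) 1, HasDerivWithinAt f' (f'' t) (Set.Icc 0 1) t)
    (hnn : ∀ t ∈ Set.Icc (0 : ℝ) 1, 0 ≤ f t)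
    (hf0 : f 0 = 0)
    (hineq : ∀ t ∈ Set.Icc (0 : ℝ) 1, 0 ≤ f'' t + M * f t)
    (t₀ : ℝ) (ht₀ : t₀ ∈ Set.Ioc (0 : ℝ) 1) (hft₀ : f t₀ = 0) :
    ∀ t ∈ Set.Icc 0 t₀, f t = 0 := by
  set r := Real.sqrt M
  have hr : 0 < r := Real.sqrt_pos.2 hM0
  have hr_sq : r ^ 2 = M := Real.sq_sqrt hM0.le
  have hr_lt : r < Real.pi := (Real.sqrt_lt' Real.pi_pos).2 hMπ
  have hg_pos (t : ℝ) (ht : t ∈ Ioc (0 : ℝ) 1) : 0 < Real.sin (r * t) :=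
    Real.sin_pos_of_pos_of_lt_pi (mul_pos hr ht.1)
      ((mul_le_of_le_one_right hr.le ht.2).trans_lt hr_lt)
  have hg (t : ℝ) : HasDerivAt (fun t => Real.sin (r * t)) (Real.cos (r * t) * r) t := by
    simpa using ((hasDerivAt_id t).const_mul r).sin
  have hg' (t : ℝ) :
      HasDerivAt (fun t => Real.cos (r * t) * r) (-(Real.sin (r * t) * r) * r) t := by
    simpa using (((hasDerivAt_id t).const_mul r).cos).mul_const r
  have hW := wronskian_nonneg_of_comparison hd1 hd2
    (fun t _ => (hg t).hasDerivWithinAt) (fun t _ => (hg' t).hasDerivWithinAt)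
    (fun t ht => by
      have := mul_nonneg (hineq t (Ioo_subset_Icc_self ht)) (hg_pos t (Ioo_subset_Ioc_self ht)).le
      rw [← hr_sq] at this
      linarith)
    (by simp [wronskian, hf0])
  have hmono := monotoneOn_div_of_wronskian_nonneg hd1 (fun t _ => (hg t).hasDerivWithinAt)
    hg_pos fun t ht => hW t (Ioo_subset_Icc_self ht)
  rintro t ⟨ht0, htt₀⟩
  rcases ht0.eq_or_lt with rfl | ht0
  · exact hf0
  have ht : t ∈ Ioc (0 : ℝ) 1 := ⟨ht0, htt₀.trans ht₀.2⟩
  have hquot : f t / Real.sin (r * t) ≤ 0 := by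
    simpa [hft₀] using hmono ht ht₀ htt₀
  exact le_antisymm ((div_le_iff₀ (hg_pos t ht)).1 hquot |>.trans_eq (zero_mul _))
    (hnn t (Ioc_subset_Icc_self ht))

/-- Sturm comparison lemma: if `f : [0,1] → ℝ` is `C²`, nonnegative, `f(0) = 0`,
satisfies `f̈ + M f ≥ 0` for a constant `0 < M < π²`, and `f(t₀) = 0` for some
`t₀ ∈ (0,1]`, then `f ≡ 0` on `[0,t₀]`. -/
theorem sturm_comparison_vanishing
    (M : ℝ) (hM0 : 0 < M) (hMπ : M < Real.pi ^ 2)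
    (f f' f'' : ℝ → ℝ)
    (hd1 : ∀ t ∈ Set.Icc (0 : ℝ) 1, HasDerivWithinAt f (f' t) (Set.Icc 0 1) t)
    (hd2 : ∀ t ∈ Set.Icc (0 : ℝ) 1, HasDerivWithinAt f' (f'' t) (Set.Icc 0 1) t)
    (hcont : ContinuousOn f'' (Set.Icc 0 1))
    (hnn : ∀ t ∈ Set.Icc (0 : ℝ) 1, 0 ≤ f t)
    (hf0 : f 0 = 0)
    (hineq : ∀ t ∈ Set.Icc (0 : ℝ) 1, 0 ≤ f'' t + M * f t)
    (t₀ : ℝ) (ht₀ : t₀ ∈ Set.Ioc (0 : ℝ) 1) (hft₀ : f t₀ = 0) :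
    ∀ t ∈ Set.Icc 0 t₀, f t = 0 :=
  sturm_comparison_vanishing_general M hM0 hMπ f f' f'' hd1 hd2 hnn hf0 hineq t₀ ht₀ hft₀
end

section
/- Let X be a complex n×n matrix such that any two eigenvalues λ₁, λ₂ of X satisfy λ₁·conj(λ₂) ≠ 1. Then the only Hermitian matrix h with X* h X = h is h = 0. -/
/-!
The map `Y ↦ Xᴴ * Y * X` is the product of two commuting operators, left multiplication
by `Xᴴ` and right multiplication by `X`. A nonzero fixed point makes the fixed space of this
product a nontrivial space invariant under both, so they have a common eigenvector in it.
Its eigenvalues are `conj λ₁` and `λ₂` for eigenvalues `λ₁, λ₂` of `X`, and their product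
is `1`.
-/

open Matrix

namespace spectrum

variable {R A : Type*} [CommRing R] [Ring A] [Algebra R A]

theorem mem_of_mul_eq_smul {a u : A} {r : R} (hu : u ≠ 0) (h : a * u = r • u) :
    r ∈ spectrum R a := by
  rw [mem_iff]
  intro hunit
  refine hu (hunit.mul_right_eq_zero.1 ?_)
  rw [sub_mul, h, Algebra.algebraMap_eq_smul_one, smul_mul_assoc, one_mul, sub_self]

theorem mem_of_mul_eq_smul' {a u : A} {r : R} (hu : u ≠ 0) (h : u * a = r • u) :
    r ∈ spectrum R a := by
  rw [mem_iff]
  intro hunit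
  refine hu (hunit.mul_left_eq_zero.1 ?_)
  rw [mul_sub, h, Algebra.algebraMap_eq_smul_one, mul_smul_comm, mul_one, sub_self]

end spectrum

namespace Module.End

variable {K V : Type*} [Field K] [IsAlgClosed K] [AddCommGroup V] [Module K V]
  [FiniteDimensional K V]

theorem exists_hasEigenvector_of_commute [Nontrivial V] {f g : End K V} (hfg : Commute f g) :
    ∃ v α β, f.HasEigenvector α v ∧ g.HasEigenvector β v := by
  obtain ⟨α, hα⟩ := f.exists_eigenvalue
  have : Nontrivial (f.eigenspace α) := Submodule.nontrivial_iff_ne_bot.2 hα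
  obtain ⟨β, hβ⟩ := exists_eigenvalue (g.restrict (mapsTo_genEigenspace_of_comm hfg α 1))
  obtain ⟨w, hw⟩ := hβ.exists_hasEigenvector
  have hw₀ : (w : V) ≠ 0 := by simpa using hw.2
  exact ⟨w, α, β, ⟨w.2, hw₀⟩,
    ⟨mem_eigenspace_iff.2 (congrArg Subtype.val hw.apply_eq_smul), hw₀⟩⟩

theorem exists_hasEigenvalue_mul_eq_one_of_commute {f g : End K V} (hfg : Commute f g)
    {v : V} (hv : v ≠ 0) (hfix : f (g v) = v) :
    ∃ α β, f.HasEigenvalue α ∧ g.HasEigenvalue β ∧ α * β = 1 := by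
  set p := (f * g).eigenspace 1
  have hf : Set.MapsTo f p p :=
    mapsTo_genEigenspace_of_comm ((Commute.refl f).mul_left hfg.symm) 1 1
  have hg : Set.MapsTo g p p := mapsTo_genEigenspace_of_comm (hfg.mul_left (.refl g)) 1 1
  have : Nontrivial p :=
    ⟨⟨⟨v, mem_eigenspace_iff.2 (by simpa using hfix)⟩, 0, by simpa using hv⟩⟩
  obtain ⟨w, α, β, hα, hβ⟩ :=
    exists_hasEigenvector_of_commute (LinearMap.restrict_commute hfg hf hg)
  have hw₀ : (w : V) ≠ 0 := by simpa using hα.2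
  have hfw : f w = α • (w : V) := congrArg Subtype.val hα.apply_eq_smul
  have hgw : g w = β • (w : V) := congrArg Subtype.val hβ.apply_eq_smul
  have hfgw : f (g w) = w := by simpa using mem_eigenspace_iff.1 w.2
  refine ⟨α, β, hasEigenvalue_of_hasEigenvector ⟨mem_eigenspace_iff.2 hfw, hw₀⟩,
    hasEigenvalue_of_hasEigenvector ⟨mem_eigenspace_iff.2 hgw, hw₀⟩, ?_⟩
  refine smul_left_injective K hw₀ ?_
  calc (α * β) • (w : V) = f (g w) := by rw [hgw, map_smul, hfw, smul_smul, mul_comm]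
    _ = (1 : K) • (w : V) := by rw [hfgw, one_smul]

end Module.End

theorem exists_mem_spectrum_mul_eq_one_of_mul_mul_eq_self (K : Type*) {A : Type*} [Field K]
    [IsAlgClosed K] [Ring A] [Algebra K A] [FiniteDimensional K A] {a b u : A} (hu : u ≠ 0)
    (h : a * u * b = u) :
    ∃ α ∈ spectrum K a, ∃ β ∈ spectrum K b, α * β = 1 := by
  obtain ⟨α, β, hα, hβ, hαβ⟩ := Module.End.exists_hasEigenvalue_mul_eq_one_of_commute
    (LinearMap.commute_mulLeft_right (R := K) a b) hu
    (by rw [LinearMap.mulLeft_apply, LinearMap.mulRight_apply, ← mul_assoc, h])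
  obtain ⟨x, hx⟩ := hα.exists_hasEigenvector
  obtain ⟨y, hy⟩ := hβ.exists_hasEigenvector
  exact ⟨α, spectrum.mem_of_mul_eq_smul hx.2 hx.apply_eq_smul,
    β, spectrum.mem_of_mul_eq_smul' hy.2 hy.apply_eq_smul, hαβ⟩

theorem hermitian_fixed_by_congruence_eq_zero_general
    (n : ℕ) (X : Matrix (Fin n) (Fin n) ℂ)
    (hspec : ∀ lam₁ lam₂ : ℂ, lam₁ ∈ spectrum ℂ X → lam₂ ∈ spectrum ℂ X →
      lam₁ * (starRingEnd ℂ) lam₂ ≠ 1)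
    (h : Matrix (Fin n) (Fin n) ℂ)
    (heq : Xᴴ * h * X = h) :
    h = 0 := by
  by_contra hne
  obtain ⟨α, hα, β, hβ, hαβ⟩ :=
    exists_mem_spectrum_mul_eq_one_of_mul_mul_eq_self ℂ hne heq
  rw [← star_eq_conjTranspose, spectrum.map_star, Set.mem_star] at hα
  exact hspec β (star α) hβ hα (by rw [Complex.star_def, Complex.conj_conj, mul_comm, hαβ])

/-- If any two eigenvalues `λ₁, λ₂` of a complex matrix `X` satisfy
`λ₁·conj(λ₂) ≠ 1`, then the only Hermitian matrix `h` with `X* h X = h` is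
`h = 0`. -/
theorem hermitian_fixed_by_congruence_eq_zero
    (n : ℕ) (X : Matrix (Fin n) (Fin n) ℂ)
    (hspec : ∀ lam₁ lam₂ : ℂ, lam₁ ∈ spectrum ℂ X → lam₂ ∈ spectrum ℂ X →
      lam₁ * (starRingEnd ℂ) lam₂ ≠ 1)
    (h : Matrix (Fin n) (Fin n) ℂ) (hherm : h.IsHermitian)
    (heq : Xᴴ * h * X = h) :
    h = 0 :=
  hermitian_fixed_by_congruence_eq_zero_general n X hspec h heq
end

section
/- Suppose A, B are complex n×n matrices with det(B + A*ζ) ≠ 0 for all |ζ| ≤ 1, and suppose a, b are complex n×n matrices satisfying aB + Ab = 0 and aA* + Aa* + b*B + B*b = 0. Then there exists a unique skew-Hermitian matrix ρ with a = Aρ and b = -ρB. -/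
/-!
Since `B` is invertible, `aB + Ab = 0` forces `a = Aρ` and `b = -ρB` with `ρ = -bB⁻¹`, and the
second equation then says that `H = ρ + ρᴴ` satisfies `AHAᴴ = BᴴHB`, i.e. `XᴴHX = H` for
`X = AᴴB⁻¹`. An eigenvalue `μ` of `X` with `|μ| ≥ 1` would make `B - μ⁻¹Aᴴ` singular, so the
spectral radius of `X` is `< 1`; by Gelfand's formula `Xᵏ → 0`, hence `H = (Xᵏ)ᴴHXᵏ → 0`.
-/

open Matrix Filter Topology

theorem exists_eq_mul_and_eq_neg_mul {R : Type*} [Ring R] {A B a b : R} (hB : IsUnit B)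
    (h : a * B + A * b = 0) : ∃ ρ, a = A * ρ ∧ b = -(ρ * B) := by
  obtain ⟨u, rfl⟩ := hB
  refine ⟨-(b * ↑u⁻¹), ?_, by simp⟩
  rw [mul_neg, ← mul_assoc, ← neg_mul, ← eq_neg_of_add_eq_zero_left h, Units.mul_inv_cancel_right]

theorem Matrix.conjTranspose_mul_inv_mul_mul_eq_self {n α : Type*} [Fintype n] [DecidableEq n]
    [CommRing α] [StarRing α] {A B H : Matrix n n α} (hB : IsUnit B.det)
    (h : A * H * Aᴴ = Bᴴ * H * B) : (Aᴴ * B⁻¹)ᴴ * H * (Aᴴ * B⁻¹) = H := by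
  have hBH : IsUnit Bᴴ.det := by simpa using hB.star
  rw [conjTranspose_mul, conjTranspose_conjTranspose, conjTranspose_nonsing_inv]
  calc Bᴴ⁻¹ * A * H * (Aᴴ * B⁻¹) = Bᴴ⁻¹ * (A * H * Aᴴ) * B⁻¹ := by noncomm_ring
    _ = Bᴴ⁻¹ * Bᴴ * H * (B * B⁻¹) := by rw [h]; noncomm_ring
    _ = H := by rw [nonsing_inv_mul _ hBH, mul_nonsing_inv _ hB, one_mul, mul_one]

theorem Matrix.norm_lt_one_of_mem_spectrum_mul_inv {n 𝕜 : Type*} [Fintype n] [DecidableEq n]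
    [NormedField 𝕜] {B C : Matrix n n 𝕜} (hdet : ∀ ζ : 𝕜, ‖ζ‖ ≤ 1 → (B + ζ • C).det ≠ 0)
    {μ : 𝕜} (hμ : μ ∈ spectrum 𝕜 (C * B⁻¹)) : ‖μ‖ < 1 := by
  by_contra! hμ1
  have hμ0 : μ ≠ 0 := norm_pos_iff.mp (one_pos.trans_le hμ1)
  have hB : IsUnit B.det := isUnit_iff_ne_zero.mpr (by simpa using hdet 0 (by simp))
  have hfactor : algebraMap 𝕜 _ μ - C * B⁻¹ = (μ • (B + (-μ⁻¹) • C)) * B⁻¹ := by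
    rw [smul_add, smul_smul, mul_neg, mul_inv_cancel₀ hμ0, neg_smul, one_smul, ← sub_eq_add_neg,
      Matrix.sub_mul, Matrix.smul_mul, mul_nonsing_inv B hB, Algebra.algebraMap_eq_smul_one]
  refine spectrum.mem_iff.mp hμ ?_
  rw [hfactor, isUnit_iff_isUnit_det, det_mul, det_smul, det_nonsing_inv]
  exact ((hμ0.isUnit.pow _).mul (hdet _ (by simpa using inv_le_one_of_one_le₀ hμ1)).isUnit).mul
    (isUnit_ringInverse.mpr hB)

theorem tendsto_pow_atTop_nhds_zero_of_spectralRadius_lt_one {A : Type*} [NormedRing A]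
    [NormedAlgebra ℂ A] [CompleteSpace A] {a : A} (h : spectralRadius ℂ a < 1) :
    Tendsto (a ^ ·) atTop (𝓝 0) := by
  obtain ⟨r, hr, hr1⟩ := ENNReal.lt_iff_exists_nnreal_btwn.mp h
  have hgelfand := spectrum.pow_nnnorm_pow_one_div_tendsto_nhds_spectralRadius a
  have hbound : ∀ᶠ n : ℕ in atTop, ‖a ^ n‖ ≤ r ^ n := by
    filter_upwards [hgelfand.eventually_lt_const hr, eventually_ge_atTop 1] with n hn hn1
    rw [one_div, ENNReal.rpow_inv_lt_iff (by positivity)] at hn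
    exact_mod_cast hn.le
  exact squeeze_zero_norm' hbound
    (tendsto_pow_atTop_nhds_zero_of_lt_one r.2 (by exact_mod_cast hr1))

theorem Matrix.tendsto_pow_atTop_nhds_zero_of_norm_spectrum_lt_one {n : Type*} [Fintype n]
    [DecidableEq n] {X : Matrix n n ℂ} (hX : ∀ μ ∈ spectrum ℂ X, ‖μ‖ < 1) :
    Tendsto (X ^ ·) atTop (𝓝 0) := by
  -- any matrix norm induces the entrywise topology
  open scoped Matrix.Norms.Operator in
  refine tendsto_pow_atTop_nhds_zero_of_spectralRadius_lt_one ?_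
  rcases (spectrum ℂ X).eq_empty_or_nonempty with h | h
  · simp [spectralRadius, h]
  · exact_mod_cast spectrum.spectralRadius_lt_of_forall_lt_of_nonempty h (r := 1)
      fun μ hμ => by exact_mod_cast hX μ hμ

theorem eq_zero_of_star_mul_mul_eq_self {R : Type*} [Ring R] [StarRing R] [TopologicalSpace R]
    [IsTopologicalRing R] [ContinuousStar R] [T2Space R] {x h : R}
    (hx : Tendsto (x ^ ·) atTop (𝓝 0)) (hfix : star x * h * x = h) : h = 0 := by
  have hpow : ∀ k : ℕ, star (x ^ k) * h * x ^ k = h := by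
    intro k
    induction k with
    | zero => simp
    | succ k ih =>
      calc star (x ^ (k + 1)) * h * x ^ (k + 1) = star x * (star (x ^ k) * h * x ^ k) * x := by
            rw [pow_succ, star_mul]; noncomm_ring
        _ = h := by rw [ih, hfix]
  have hlim : Tendsto (fun k : ℕ => star (x ^ k) * h * x ^ k) atTop (𝓝 (star 0 * h * 0)) :=
    (hx.star.mul_const h).mul hx
  simp only [hpow, star_zero, zero_mul, mul_zero] at hlim
  exact tendsto_nhds_unique tendsto_const_nhds hlim

/-- If `det(B + A*ζ) ≠ 0` for all `|ζ| ≤ 1` and `a, b` satisfy `aB + Ab = 0`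
and `aA* + Aa* + b*B + B*b = 0`, then there exists a unique skew-Hermitian
matrix `ρ` with `a = Aρ` and `b = -ρB`. -/
theorem unique_skew_hermitian_rho
    (n : ℕ) (A B a b : Matrix (Fin n) (Fin n) ℂ)
    (hdet : ∀ ζ : ℂ, ‖ζ‖ ≤ 1 → (B + ζ • Aᴴ).det ≠ 0)
    (h1 : a * B + A * b = 0)
    (h2 : a * Aᴴ + A * aᴴ + bᴴ * B + Bᴴ * b = 0) :
    ∃! ρ : Matrix (Fin n) (Fin n) ℂ,
      ρᴴ = -ρ ∧ a = A * ρ ∧ b = -(ρ * B) := by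
  have hBdet : IsUnit B.det := isUnit_iff_ne_zero.mpr (by simpa using hdet 0 (by simp))
  have hB : IsUnit B := (isUnit_iff_isUnit_det B).mpr hBdet
  obtain ⟨ρ, rfl, rfl⟩ := exists_eq_mul_and_eq_neg_mul hB h1
  have hcongr : A * (ρ + ρᴴ) * Aᴴ = Bᴴ * (ρ + ρᴴ) * B := by
    simp only [conjTranspose_mul, conjTranspose_neg] at h2
    rw [← sub_eq_zero, ← h2]
    noncomm_ring
  have hherm : ρ + ρᴴ = 0 := eq_zero_of_star_mul_mul_eq_self
    (tendsto_pow_atTop_nhds_zero_of_norm_spectrum_lt_one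
      fun _ => norm_lt_one_of_mem_spectrum_mul_inv hdet)
    (conjTranspose_mul_inv_mul_mul_eq_self hBdet hcongr)
  refine ⟨ρ, ⟨eq_neg_of_add_eq_zero_right hherm, rfl, rfl⟩, ?_⟩
  rintro ρ' ⟨-, -, hρ'⟩
  exact hB.mul_left_inj.mp (neg_injective hρ'.symm)
end

section
/- Let T₁,T₂,T₃ ∈ u(n) and suppose the matrix polynomial T(ζ) = T₂ + iT₃ + 2iT₁ζ + (-T₂+iT₃)ζ² factorizes as T(ζ) = (A + B*ζ)(B + A*ζ) for complex n×n matrices A, B. Then ‖T₂ + iT₃‖ ≤ 2‖T₁‖, where ‖·‖ is the operator norm. -/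
/-!
Comparing coefficients of the factorization gives `T₂ + iT₃ = AB` and `2iT₁ = AA* + B*B`.
Since `AA*` and `B*B` are positive, the C*-identity gives `‖A‖² = ‖AA*‖ ≤ ‖AA* + B*B‖` and likewise
`‖B‖² ≤ ‖AA* + B*B‖`, so `‖AB‖ ≤ ‖A‖‖B‖ ≤ ‖AA* + B*B‖ = 2‖T₁‖`.
-/

open Matrix
open scoped Matrix.Norms.L2Operator

theorem CStarRing.norm_mul_le_norm_mul_star_add_star_mul {E : Type*} [CStarAlgebra E]
    [PartialOrder E] [StarOrderedRing E] (a b : E) :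
    ‖a * b‖ ≤ ‖a * star a + star b * b‖ := by
  set s := a * star a + star b * b
  have ha : ‖a‖ * ‖a‖ ≤ ‖s‖ := by
    rw [← CStarRing.norm_self_mul_star]
    exact CStarAlgebra.norm_le_norm_of_nonneg_of_le (mul_star_self_nonneg a)
      (le_add_of_nonneg_right (star_mul_self_nonneg b))
  have hb : ‖b‖ * ‖b‖ ≤ ‖s‖ := by
    rw [← CStarRing.norm_star_mul_self]
    exact CStarAlgebra.norm_le_norm_of_nonneg_of_le (star_mul_self_nonneg b)
      (le_add_of_nonneg_left (mul_star_self_nonneg a))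
  calc ‖a * b‖ ≤ ‖a‖ * ‖b‖ := norm_mul_le a b
    _ ≤ ‖s‖ := by nlinarith [norm_nonneg a, norm_nonneg b]

theorem coeff_eq_of_forall_quadratic_eq_mul {𝕜 R : Type*} [Field 𝕜] [NeZero (2 : 𝕜)] [Ring R]
    [Algebra 𝕜 R] {P Q S A B C D : R}
    (h : ∀ ζ : 𝕜, P + ζ • Q + ζ ^ 2 • S = (A + ζ • C) * (B + ζ • D)) :
    P = A * B ∧ Q = A * D + C * B := by
  have h₀ := h 0
  have h₁ := h 1
  have h₂ := h (-1)
  simp only [zero_smul, add_zero, zero_pow two_ne_zero, one_smul, one_pow, neg_one_sq, neg_smul,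
    add_mul, mul_add, neg_mul, mul_neg] at h₀ h₁ h₂
  refine ⟨h₀, ?_⟩
  have : (2 : 𝕜) • Q = (2 : 𝕜) • (A * D + C * B) := by
    linear_combination (norm := module) h₁ - h₂
  exact smul_right_injective R two_ne_zero this

open scoped MatrixOrder

theorem positive_factorization_norm_bound_general
    (n : ℕ) (T₁ T₂ T₃ : Matrix (Fin n) (Fin n) ℂ)
    (A B : Matrix (Fin n) (Fin n) ℂ)
    (hfact : ∀ ζ : ℂ,
      T₂ + Complex.I • T₃ + (2 * Complex.I * ζ) • T₁
          + ζ ^ 2 • (-T₂ + Complex.I • T₃)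
        = (A + ζ • Bᴴ) * (B + ζ • Aᴴ)) :
    ‖T₂ + Complex.I • T₃‖ ≤ 2 * ‖T₁‖ := by
  have hfact_smul : ∀ ζ : ℂ, T₂ + Complex.I • T₃ + ζ • ((2 * Complex.I) • T₁)
      + ζ ^ 2 • (-T₂ + Complex.I • T₃) = (A + ζ • Bᴴ) * (B + ζ • Aᴴ) := fun ζ => by
    rw [smul_smul, mul_comm ζ, hfact]
  obtain ⟨hconst, hlin⟩ := coeff_eq_of_forall_quadratic_eq_mul hfact_smul
  calc ‖T₂ + Complex.I • T₃‖ = ‖A * B‖ := by rw [hconst]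
    _ ≤ ‖A * star A + star B * B‖ := CStarRing.norm_mul_le_norm_mul_star_add_star_mul A B
    _ = 2 * ‖T₁‖ := by
      rw [star_eq_conjTranspose, star_eq_conjTranspose, ← hlin, norm_smul]
      simp

/-- If `T₁,T₂,T₃ ∈ u(n)` and the matrix polynomial
`T(ζ) = T₂ + iT₃ + 2iT₁ζ + (-T₂+iT₃)ζ²` factorizes as
`T(ζ) = (A + B*ζ)(B + A*ζ)`, then `‖T₂ + iT₃‖ ≤ 2‖T₁‖` in the operator norm. -/
theorem positive_factorization_norm_bound
    (n : ℕ) (T₁ T₂ T₃ : Matrix (Fin n) (Fin n) ℂ)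
    (hT1 : T₁ᴴ = -T₁) (hT2 : T₂ᴴ = -T₂) (hT3 : T₃ᴴ = -T₃)
    (A B : Matrix (Fin n) (Fin n) ℂ)
    (hfact : ∀ ζ : ℂ,
      T₂ + Complex.I • T₃ + (2 * Complex.I * ζ) • T₁
          + ζ ^ 2 • (-T₂ + Complex.I • T₃)
        = (A + ζ • Bᴴ) * (B + ζ • Aᴴ)) :
    ‖T₂ + Complex.I • T₃‖ ≤ 2 * ‖T₁‖ :=
  positive_factorization_norm_bound_general n T₁ T₂ T₃ A B hfact
end

section
/- If A(t), B(t) are differentiable matrix-valued functions satisfying Ȧ = ½(B*BA - ABB*) and Ḃ = ½(A*AB - BAA*), then T₁ = -(i/2)(AA* + B*B), T₂ + iT₃ = AB (with T₂, T₃ skew-Hermitian determined by decomposing AB) satisfy the reduced Nahm–Schmid equations Ṫ₁ = -[T₂,T₃], Ṫ₂ = [T₃,T₁], Ṫ₃ = [T₁,T₂]. Equivalently, setting β = AB and α' := T₁-part, the equations d/dt(AB) + [(i/2)(AA*+B*B), AB] = 0 and the real equation hold. -/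
/-!
Put `β = AB` and `H = AA* + B*B`. The flow gives `β̇ = ½[H, β]` and `Ḣ = [β*, β]`, and
`T₁ = -(i/2)H`, `T₂ = ½(β - β*)`, `T₃ = -(i/2)(β + β*)` depend ℝ-linearly on `H` and `β`.
So the derivatives of the `T`'s are these maps applied to `Ḣ` and `β̇`, and the Nahm–Schmid
equations become bracket identities in an arbitrary complex star algebra, valid as soon as
`H` is self-adjoint.
-/

open Matrix

/-- `T₁ = -(i/2)(AA* + B*B)`. -/
noncomputable def T1AB {n : ℕ} (A B : Matrix (Fin n) (Fin n) ℂ) :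
    Matrix (Fin n) (Fin n) ℂ := (-(Complex.I / 2)) • (A * Aᴴ + Bᴴ * B)

/-- `T₂ = ½(AB - (AB)*)`. -/
noncomputable def T2AB {n : ℕ} (A B : Matrix (Fin n) (Fin n) ℂ) :
    Matrix (Fin n) (Fin n) ℂ := ((1 : ℂ) / 2) • (A * B - (A * B)ᴴ)

/-- `T₃ = -(i/2)(AB + (AB)*)`. -/
noncomputable def T3AB {n : ℕ} (A B : Matrix (Fin n) (Fin n) ℂ) :
    Matrix (Fin n) (Fin n) ℂ := (-(Complex.I / 2)) • (A * B + (A * B)ᴴ)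

open Complex

section NahmAlgebra

variable {R : Type*} [Ring R] [StarRing R] [Algebra ℂ R]

noncomputable def nahmT₁ (H : R) : R := (-(I / 2)) • H

noncomputable def nahmT₂ (β : R) : R := ((1 : ℂ) / 2) • (β - star β)

noncomputable def nahmT₃ (β : R) : R := (-(I / 2)) • (β + star β)

theorem nahmT₂_add_I_smul_nahmT₃ (β : R) : nahmT₂ β + I • nahmT₃ β = β := by
  simp only [nahmT₂, nahmT₃, smul_smul, smul_add, smul_sub]
  match_scalars <;> ring_nf <;> norm_num [I_sq]

theorem nahmT₁_lie_star_self (β : R) : nahmT₁ ⁅star β, β⁆ = -⁅nahmT₂ β, nahmT₃ β⁆ := by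
  simp only [nahmT₁, nahmT₂, nahmT₃, Ring.lie_def, smul_mul_assoc, mul_smul_comm, smul_smul,
    smul_add, smul_sub, mul_add, add_mul, mul_sub, sub_mul]
  match_scalars <;> ring

theorem nahmT₂_half_smul_lie [StarModule ℂ R] {H : R} (hH : IsSelfAdjoint H) (β : R) :
    nahmT₂ (((1 : ℂ) / 2) • ⁅H, β⁆) = ⁅nahmT₃ β, nahmT₁ H⁆ := by
  simp only [nahmT₁, nahmT₂, nahmT₃, Ring.lie_def, star_smul, star_sub, star_mul, hH.star_eq,
    smul_mul_assoc, mul_smul_comm, smul_smul, smul_add, smul_sub, mul_add, add_mul]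
  match_scalars <;> ring_nf <;> norm_num [I_sq]

theorem nahmT₃_half_smul_lie [StarModule ℂ R] {H : R} (hH : IsSelfAdjoint H) (β : R) :
    nahmT₃ (((1 : ℂ) / 2) • ⁅H, β⁆) = ⁅nahmT₁ H, nahmT₂ β⁆ := by
  simp only [nahmT₁, nahmT₂, nahmT₃, Ring.lie_def, star_smul, star_sub, star_mul, hH.star_eq,
    smul_mul_assoc, mul_smul_comm, smul_smul, smul_add, smul_sub, mul_sub, sub_mul]
  match_scalars <;> ring_nf <;> norm_num [I_sq] <;> ring

end NahmAlgebra

section EntrywiseDeriv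

variable {𝕜 : Type*} [RCLike 𝕜] {l m n : Type*}

def HasEntrywiseDerivAt (M : ℝ → Matrix m n 𝕜) (M' : Matrix m n 𝕜) (t : ℝ) : Prop :=
  ∀ i j, HasDerivAt (fun s => M s i j) (M' i j) t

namespace HasEntrywiseDerivAt

variable {M N : ℝ → Matrix m n 𝕜} {M' N' : Matrix m n 𝕜} {t : ℝ}

theorem congr_deriv (hM : HasEntrywiseDerivAt M M' t) (h : M' = N') :
    HasEntrywiseDerivAt M N' t :=
  h ▸ hM

theorem add (hM : HasEntrywiseDerivAt M M' t) (hN : HasEntrywiseDerivAt N N' t) :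
    HasEntrywiseDerivAt (fun s => M s + N s) (M' + N') t :=
  fun i j => (hM i j).add (hN i j)

theorem sub (hM : HasEntrywiseDerivAt M M' t) (hN : HasEntrywiseDerivAt N N' t) :
    HasEntrywiseDerivAt (fun s => M s - N s) (M' - N') t :=
  fun i j => (hM i j).sub (hN i j)

theorem const_smul (c : 𝕜) (hM : HasEntrywiseDerivAt M M' t) :
    HasEntrywiseDerivAt (fun s => c • M s) (c • M') t :=
  fun i j => (hM i j).const_mul c

theorem conjTranspose (hM : HasEntrywiseDerivAt M M' t) :
    HasEntrywiseDerivAt (fun s => (M s)ᴴ) M'ᴴ t :=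
  fun i j => (hM j i).star

theorem mul [Fintype n] {N : ℝ → Matrix n l 𝕜} {N' : Matrix n l 𝕜}
    (hM : HasEntrywiseDerivAt M M' t) (hN : HasEntrywiseDerivAt N N' t) :
    HasEntrywiseDerivAt (fun s => M s * N s) (M' * N t + M t * N') t := by
  intro i k
  simpa only [mul_apply, Matrix.add_apply, Pi.mul_apply, Finset.sum_add_distrib] using
    HasDerivAt.fun_sum fun j _ => (hM i j).mul (hN j k)

end HasEntrywiseDerivAt

variable [Fintype n] {A B : ℝ → Matrix n n 𝕜} {t : ℝ}

theorem hasEntrywiseDerivAt_mul_of_flow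
    (hA : HasEntrywiseDerivAt A (((1 : 𝕜) / 2) • ((B t)ᴴ * B t * A t - A t * (B t * (B t)ᴴ))) t)
    (hB : HasEntrywiseDerivAt B (((1 : 𝕜) / 2) • ((A t)ᴴ * A t * B t - B t * (A t * (A t)ᴴ))) t) :
    HasEntrywiseDerivAt (fun s => A s * B s)
      (((1 : 𝕜) / 2) • ⁅A t * (A t)ᴴ + (B t)ᴴ * B t, A t * B t⁆) t := by
  convert hA.mul hB using 1
  simp only [Ring.lie_def, smul_mul_assoc, mul_smul_comm, smul_sub, mul_sub, sub_mul, add_mul,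
    mul_add, mul_assoc]
  module

theorem hasEntrywiseDerivAt_mul_conjTranspose_add_of_flow
    (hA : HasEntrywiseDerivAt A (((1 : 𝕜) / 2) • ((B t)ᴴ * B t * A t - A t * (B t * (B t)ᴴ))) t)
    (hB : HasEntrywiseDerivAt B (((1 : 𝕜) / 2) • ((A t)ᴴ * A t * B t - B t * (A t * (A t)ᴴ))) t) :
    HasEntrywiseDerivAt (fun s => A s * (A s)ᴴ + (B s)ᴴ * B s) ⁅(A t * B t)ᴴ, A t * B t⁆ t := by
  convert (hA.mul hA.conjTranspose).add (hB.conjTranspose.mul hB) using 1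
  simp only [Ring.lie_def, conjTranspose_smul, conjTranspose_sub, conjTranspose_mul,
    conjTranspose_conjTranspose, smul_mul_assoc, mul_smul_comm, smul_sub, mul_sub, sub_mul,
    mul_assoc, star_div₀, star_one, star_ofNat]
  module

end EntrywiseDeriv

section NahmDeriv

variable {n : Type*} [Fintype n] [DecidableEq n] {M : ℝ → Matrix n n ℂ} {M' : Matrix n n ℂ} {t : ℝ}

theorem HasEntrywiseDerivAt.nahmT₁ (h : HasEntrywiseDerivAt M M' t) :
    HasEntrywiseDerivAt (fun s => nahmT₁ (M s)) (nahmT₁ M') t :=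
  h.const_smul _

theorem HasEntrywiseDerivAt.nahmT₂ (h : HasEntrywiseDerivAt M M' t) :
    HasEntrywiseDerivAt (fun s => nahmT₂ (M s)) (nahmT₂ M') t :=
  (h.sub h.conjTranspose).const_smul _

theorem HasEntrywiseDerivAt.nahmT₃ (h : HasEntrywiseDerivAt M M' t) :
    HasEntrywiseDerivAt (fun s => nahmT₃ (M s)) (nahmT₃ M') t :=
  (h.add h.conjTranspose).const_smul _

end NahmDeriv

/-- If `A(t), B(t)` satisfy `Ȧ = ½(B*BA - ABB*)` and `Ḃ = ½(A*AB - BAA*)`,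
then `T₁ = -(i/2)(AA* + B*B)`, `T₂ = ½(AB - (AB)*)`, `T₃ = -(i/2)(AB + (AB)*)`
satisfy `T₂ + iT₃ = AB` and the reduced Nahm–Schmid equations
`Ṫ₁ = -[T₂,T₃]`, `Ṫ₂ = [T₃,T₁]`, `Ṫ₃ = [T₁,T₂]`. -/
theorem basu_harvey_terashima_to_nahm_schmid
    (n : ℕ) (A B : ℝ → Matrix (Fin n) (Fin n) ℂ)
    (hA : ∀ t i j, HasDerivAt (fun s => A s i j)
      ((((1 : ℂ) / 2) • ((B t)ᴴ * B t * A t - A t * (B t * (B t)ᴴ))) i j) t)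
    (hB : ∀ t i j, HasDerivAt (fun s => B s i j)
      ((((1 : ℂ) / 2) • ((A t)ᴴ * A t * B t - B t * (A t * (A t)ᴴ))) i j) t) :
    (∀ t, T2AB (A t) (B t) + Complex.I • T3AB (A t) (B t) = A t * B t) ∧
    (∀ t i j, HasDerivAt (fun s => T1AB (A s) (B s) i j)
      ((-⁅T2AB (A t) (B t), T3AB (A t) (B t)⁆) i j) t) ∧
    (∀ t i j, HasDerivAt (fun s => T2AB (A s) (B s) i j)
      ((⁅T3AB (A t) (B t), T1AB (A t) (B t)⁆) i j) t) ∧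
    (∀ t i j, HasDerivAt (fun s => T3AB (A s) (B s) i j)
      ((⁅T1AB (A t) (B t), T2AB (A t) (B t)⁆) i j) t) := by
  have hβ t := hasEntrywiseDerivAt_mul_of_flow (hA t) (hB t)
  have hH t := hasEntrywiseDerivAt_mul_conjTranspose_add_of_flow (hA t) (hB t)
  have hH_selfAdjoint t : IsSelfAdjoint (A t * (A t)ᴴ + (B t)ᴴ * B t) :=
    (IsSelfAdjoint.mul_star_self (A t)).add (IsSelfAdjoint.star_mul_self (B t))
  exact ⟨fun t => nahmT₂_add_I_smul_nahmT₃ (A t * B t),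
    fun t => (hH t).nahmT₁.congr_deriv (nahmT₁_lie_star_self _),
    fun t => (hβ t).nahmT₂.congr_deriv (nahmT₂_half_smul_lie (hH_selfAdjoint t) _),
    fun t => (hβ t).nahmT₃.congr_deriv (nahmT₃_half_smul_lie (hH_selfAdjoint t) _)⟩
end

section
/- If (T₀,T₁,T₂,T₃) solves the Nahm–Schmid equations and we set T(ζ) = β - ζ(α + α*) + ζ²β* and T₊(ζ) = α - ζβ* (with α = T₀ - iT₁, β = T₂ + iT₃), then dT(ζ)/dt = [T(ζ), T₊(ζ)] for every ζ ∈ ℂ; consequently tr(T(ζ)^k) is constant in t for every k ≥ 1 and every ζ. -/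
/-!
On `u(n)` the adjoints cancel `T₀` in `T(ζ)`, leaving `T(ζ) = 2iζ T₁ + (1 - ζ²) T₂ + i(1 + ζ²) T₃`;
a direct computation shows that `[T(ζ), T₊(ζ)]` is the same combination of the right-hand sides
of the Nahm–Schmid equations, i.e. of `Ṫ₁, Ṫ₂, Ṫ₃`. For the isospectrality, a Lax equation
`Ȧ = [A, P]` propagates by the Leibniz rule to `d(Aᵏ)/dt = [Aᵏ, P]`, whose trace vanishes.
-/

open Matrix

/-- The Lax matrix `T(ζ) = β - ζ(α + α*) + ζ²β*` with `α = T₀ - iT₁`,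
`β = T₂ + iT₃`. -/
noncomputable def LaxT {n : ℕ} (T₀ T₁ T₂ T₃ : Matrix (Fin n) (Fin n) ℂ)
    (ζ : ℂ) : Matrix (Fin n) (Fin n) ℂ :=
  (T₂ + Complex.I • T₃)
    - ζ • ((T₀ - Complex.I • T₁) + (T₀ - Complex.I • T₁)ᴴ)
    + ζ ^ 2 • (T₂ + Complex.I • T₃)ᴴ

/-- `T₊(ζ) = α - ζβ*`. -/
noncomputable def LaxTplus {n : ℕ} (T₀ T₁ T₂ T₃ : Matrix (Fin n) (Fin n) ℂ)
    (ζ : ℂ) : Matrix (Fin n) (Fin n) ℂ :=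
  (T₀ - Complex.I • T₁) - ζ • (T₂ + Complex.I • T₃)ᴴ

section EntrywiseDerivative

variable {𝕜 R : Type*} [NontriviallyNormedField 𝕜] [NormedRing R] [NormedAlgebra 𝕜 R]
  {m n p : Type*} [Fintype n] {x : 𝕜}

theorem hasDerivAt_matrix_mul_apply {A : 𝕜 → Matrix m n R} {B : 𝕜 → Matrix n p R}
    {A' : Matrix m n R} {B' : Matrix n p R}
    (hA : ∀ i j, HasDerivAt (fun s => A s i j) (A' i j) x)
    (hB : ∀ i j, HasDerivAt (fun s => B s i j) (B' i j) x) (i : m) (j : p) :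
    HasDerivAt (fun s => (A s * B s) i j) ((A' * B x + A x * B') i j) x := by
  simp only [mul_apply, Matrix.add_apply, ← Finset.sum_add_distrib]
  exact HasDerivAt.fun_sum fun k _ => (hA i k).mul (hB k j)

theorem hasDerivAt_matrix_pow_apply_of_lie [DecidableEq n] {A : 𝕜 → Matrix n n R}
    {P : Matrix n n R} (hA : ∀ i j, HasDerivAt (fun s => A s i j) (⁅A x, P⁆ i j) x)
    (k : ℕ) (i j : n) :
    HasDerivAt (fun s => (A s ^ k) i j) (⁅A x ^ k, P⁆ i j) x := by
  induction k generalizing i j with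
  | zero => simpa [Ring.lie_def] using hasDerivAt_const x ((1 : Matrix n n R) i j)
  | succ k ih =>
    have hleibniz : ⁅A x ^ (k + 1), P⁆ = ⁅A x ^ k, P⁆ * A x + A x ^ k * ⁅A x, P⁆ := by
      simp only [Ring.lie_def, pow_succ]
      noncomm_ring
    simpa only [← pow_succ, ← hleibniz] using hasDerivAt_matrix_mul_apply ih hA i j

end EntrywiseDerivative

theorem hasDerivAt_matrix_trace {𝕜 F : Type*} [NontriviallyNormedField 𝕜] [NormedAddCommGroup F]
    [NormedSpace 𝕜 F] {n : Type*} [Fintype n] {A : 𝕜 → Matrix n n F} {A' : Matrix n n F} {x : 𝕜}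
    (hA : ∀ i, HasDerivAt (fun s => A s i i) (A' i i) x) :
    HasDerivAt (fun s => trace (A s)) (trace A') x :=
  HasDerivAt.fun_sum fun i _ => hA i

theorem trace_pow_eq_of_hasDerivAt_lie {𝕜 R : Type*} [RCLike 𝕜] [NormedCommRing R]
    [NormedAlgebra 𝕜 R] {n : Type*} [Fintype n] [DecidableEq n]
    {A P : 𝕜 → Matrix n n R}
    (hA : ∀ x i j, HasDerivAt (fun s => A s i j) (⁅A x, P x⁆ i j) x) (k : ℕ) (x y : 𝕜) :
    trace (A x ^ k) = trace (A y ^ k) := by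
  have hderiv (x : 𝕜) : HasDerivAt (fun s => trace (A s ^ k)) 0 x := by
    rw [← LieAlgebra.matrix_trace_commutator_zero n R (A x ^ k) (P x)]
    exact hasDerivAt_matrix_trace fun i => hasDerivAt_matrix_pow_apply_of_lie (hA x) k i i
  exact is_const_of_deriv_eq_zero (fun x => (hderiv x).differentiableAt)
    (fun x => (hderiv x).deriv) x y

section NahmSchmid

open Complex

variable {ι : Type*}

def laxTOfSkew (ζ : ℂ) (X₁ X₂ X₃ : Matrix ι ι ℂ) : Matrix ι ι ℂ :=
  (2 * I * ζ) • X₁ + (1 - ζ ^ 2) • X₂ + (I * (1 + ζ ^ 2)) • X₃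

theorem hasDerivAt_laxTOfSkew_apply (ζ : ℂ) {X₁ X₂ X₃ : ℝ → Matrix ι ι ℂ}
    {X₁' X₂' X₃' : Matrix ι ι ℂ} {t : ℝ} {i j : ι}
    (h₁ : HasDerivAt (fun s => X₁ s i j) (X₁' i j) t)
    (h₂ : HasDerivAt (fun s => X₂ s i j) (X₂' i j) t)
    (h₃ : HasDerivAt (fun s => X₃ s i j) (X₃' i j) t) :
    HasDerivAt (fun s => laxTOfSkew ζ (X₁ s) (X₂ s) (X₃ s) i j)
      (laxTOfSkew ζ X₁' X₂' X₃' i j) t := by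
  simp only [laxTOfSkew, Matrix.add_apply, Matrix.smul_apply, smul_eq_mul]
  exact ((h₁.const_mul _).add (h₂.const_mul _)).add (h₃.const_mul _)

variable {n : ℕ} {T₀ T₁ T₂ T₃ : Matrix (Fin n) (Fin n) ℂ}

theorem laxT_eq_laxTOfSkew (h₀ : T₀ᴴ = -T₀) (h₁ : T₁ᴴ = -T₁) (h₂ : T₂ᴴ = -T₂)
    (h₃ : T₃ᴴ = -T₃) (ζ : ℂ) : LaxT T₀ T₁ T₂ T₃ ζ = laxTOfSkew ζ T₁ T₂ T₃ := by
  simp only [LaxT, laxTOfSkew, conjTranspose_add, conjTranspose_sub, conjTranspose_smul,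
    h₀, h₁, h₂, h₃, RCLike.star_def, conj_I]
  module

theorem lie_laxT_laxTplus (h₀ : T₀ᴴ = -T₀) (h₁ : T₁ᴴ = -T₁) (h₂ : T₂ᴴ = -T₂)
    (h₃ : T₃ᴴ = -T₃) (ζ : ℂ) :
    ⁅LaxT T₀ T₁ T₂ T₃ ζ, LaxTplus T₀ T₁ T₂ T₃ ζ⁆ =
      laxTOfSkew ζ (-⁅T₂, T₃⁆ - ⁅T₀, T₁⁆) (⁅T₃, T₁⁆ - ⁅T₀, T₂⁆) (⁅T₁, T₂⁆ - ⁅T₀, T₃⁆) := by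
  rw [laxT_eq_laxTOfSkew h₀ h₁ h₂ h₃]
  have hplus : LaxTplus T₀ T₁ T₂ T₃ ζ = T₀ - I • T₁ + ζ • T₂ - (I * ζ) • T₃ := by
    simp only [LaxTplus, conjTranspose_add, conjTranspose_smul, h₂, h₃, RCLike.star_def, conj_I]
    module
  rw [hplus]
  simp only [laxTOfSkew, Ring.lie_def, mul_add, add_mul, mul_sub, sub_mul, smul_mul_assoc,
    mul_smul_comm, smul_sub, smul_add, smul_smul, smul_neg]
  match_scalars <;> ring_nf <;> simp only [I_sq] <;> ring

end NahmSchmid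

theorem nahm_schmid_lax_pair_general
    (n : ℕ) (T₀ T₁ T₂ T₃ T₁' T₂' T₃' : ℝ → Matrix (Fin n) (Fin n) ℂ)
    (hu0 : ∀ t, (T₀ t)ᴴ = -T₀ t) (hu1 : ∀ t, (T₁ t)ᴴ = -T₁ t)
    (hu2 : ∀ t, (T₂ t)ᴴ = -T₂ t) (hu3 : ∀ t, (T₃ t)ᴴ = -T₃ t)
    (hd1 : ∀ t i j, HasDerivAt (fun s => T₁ s i j) (T₁' t i j) t)
    (hd2 : ∀ t i j, HasDerivAt (fun s => T₂ s i j) (T₂' t i j) t)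
    (hd3 : ∀ t i j, HasDerivAt (fun s => T₃ s i j) (T₃' t i j) t)
    (e1 : ∀ t, T₁' t + ⁅T₀ t, T₁ t⁆ = -⁅T₂ t, T₃ t⁆)
    (e2 : ∀ t, T₂' t + ⁅T₀ t, T₂ t⁆ = ⁅T₃ t, T₁ t⁆)
    (e3 : ∀ t, T₃' t + ⁅T₀ t, T₃ t⁆ = ⁅T₁ t, T₂ t⁆) :
    (∀ ζ : ℂ, ∀ t : ℝ, ∀ i j,
      HasDerivAt (fun s => LaxT (T₀ s) (T₁ s) (T₂ s) (T₃ s) ζ i j)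
        (⁅LaxT (T₀ t) (T₁ t) (T₂ t) (T₃ t) ζ,
          LaxTplus (T₀ t) (T₁ t) (T₂ t) (T₃ t) ζ⁆ i j) t) ∧
    (∀ k : ℕ, 1 ≤ k → ∀ ζ : ℂ, ∀ t : ℝ,
      Matrix.trace ((LaxT (T₀ t) (T₁ t) (T₂ t) (T₃ t) ζ) ^ k)
        = Matrix.trace ((LaxT (T₀ 0) (T₁ 0) (T₂ 0) (T₃ 0) ζ) ^ k)) := by
  have hlax (ζ : ℂ) (t : ℝ) (i j : Fin n) :
      HasDerivAt (fun s => LaxT (T₀ s) (T₁ s) (T₂ s) (T₃ s) ζ i j)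
        (⁅LaxT (T₀ t) (T₁ t) (T₂ t) (T₃ t) ζ, LaxTplus (T₀ t) (T₁ t) (T₂ t) (T₃ t) ζ⁆ i j) t := by
    have hT (s : ℝ) : LaxT (T₀ s) (T₁ s) (T₂ s) (T₃ s) ζ = laxTOfSkew ζ (T₁ s) (T₂ s) (T₃ s) :=
      laxT_eq_laxTOfSkew (hu0 s) (hu1 s) (hu2 s) (hu3 s) ζ
    have hbracket : ⁅LaxT (T₀ t) (T₁ t) (T₂ t) (T₃ t) ζ, LaxTplus (T₀ t) (T₁ t) (T₂ t) (T₃ t) ζ⁆ =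
        laxTOfSkew ζ (T₁' t) (T₂' t) (T₃' t) := by
      rw [lie_laxT_laxTplus (hu0 t) (hu1 t) (hu2 t) (hu3 t), eq_sub_of_add_eq (e1 t),
        eq_sub_of_add_eq (e2 t), eq_sub_of_add_eq (e3 t)]
    rw [hbracket]
    simpa only [hT] using
      hasDerivAt_laxTOfSkew_apply ζ (hd1 t i j) (hd2 t i j) (hd3 t i j)
  exact ⟨hlax, fun k _ ζ t => trace_pow_eq_of_hasDerivAt_lie (hlax ζ) k t 0⟩

/-- If `(T₀,T₁,T₂,T₃)` solves the Nahm–Schmid equations in `u(n)`, then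
`dT(ζ)/dt = [T(ζ), T₊(ζ)]` for every `ζ ∈ ℂ`, and consequently `tr(T(ζ)^k)`
is constant in `t` for every `k ≥ 1` and every `ζ`. -/
theorem nahm_schmid_lax_pair
    (n : ℕ) (T₀ T₁ T₂ T₃ T₀' T₁' T₂' T₃' : ℝ → Matrix (Fin n) (Fin n) ℂ)
    (hu0 : ∀ t, (T₀ t)ᴴ = -T₀ t) (hu1 : ∀ t, (T₁ t)ᴴ = -T₁ t)
    (hu2 : ∀ t, (T₂ t)ᴴ = -T₂ t) (hu3 : ∀ t, (T₃ t)ᴴ = -T₃ t)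
    (hd0 : ∀ t i j, HasDerivAt (fun s => T₀ s i j) (T₀' t i j) t)
    (hd1 : ∀ t i j, HasDerivAt (fun s => T₁ s i j) (T₁' t i j) t)
    (hd2 : ∀ t i j, HasDerivAt (fun s => T₂ s i j) (T₂' t i j) t)
    (hd3 : ∀ t i j, HasDerivAt (fun s => T₃ s i j) (T₃' t i j) t)
    (e1 : ∀ t, T₁' t + ⁅T₀ t, T₁ t⁆ = -⁅T₂ t, T₃ t⁆)
    (e2 : ∀ t, T₂' t + ⁅T₀ t, T₂ t⁆ = ⁅T₃ t, T₁ t⁆)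
    (e3 : ∀ t, T₃' t + ⁅T₀ t, T₃ t⁆ = ⁅T₁ t, T₂ t⁆) :
    (∀ ζ : ℂ, ∀ t : ℝ, ∀ i j,
      HasDerivAt (fun s => LaxT (T₀ s) (T₁ s) (T₂ s) (T₃ s) ζ i j)
        (⁅LaxT (T₀ t) (T₁ t) (T₂ t) (T₃ t) ζ,
          LaxTplus (T₀ t) (T₁ t) (T₂ t) (T₃ t) ζ⁆ i j) t) ∧
    (∀ k : ℕ, 1 ≤ k → ∀ ζ : ℂ, ∀ t : ℝ,
      Matrix.trace ((LaxT (T₀ t) (T₁ t) (T₂ t) (T₃ t) ζ) ^ k)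
        = Matrix.trace ((LaxT (T₀ 0) (T₁ 0) (T₂ 0) (T₃ 0) ζ) ^ k)) :=
  nahm_schmid_lax_pair_general n T₀ T₁ T₂ T₃ T₁' T₂' T₃' hu0 hu1 hu2 hu3 hd1 hd2 hd3 e1 e2 e3
end
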